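/- arXiv:1907.02146 — 2 statements merged into one kernel-verified Lean document; each statement's English description precedes it below -/
import Mathlib

section
/- The shortest-fastest-path length (sf-metric) is not a metric: there exists a link stream L and temporal nodes x, y, z such that sf(x,z) > sf(x,y) + sf(y,z), i.e., the sf-metric violates the triangle inequality. -/
/-- A temporal walk in a link stream: each step `(t, w)` means traversing the
temporal edge `(t, current, w)`. -/
def IsWalk {V : Type*} (E : Set (ℝ × V × V)) : V → List (ℝ × V) → V → Prop
  | u, [], v => u = v
  | u, (t, w) :: rest, v => (t, u, w) ∈ E ∧ IsWalk E w rest v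

/-- A (time-respecting) path in the link stream from `(α, u)` to `(ω, v)`. -/
def IsPath {V : Type*} (E : Set (ℝ × V × V)) (α : ℝ) (u : V) (ω : ℝ) (v : V)
    (L : List (ℝ × V)) : Prop :=
  α ≤ ω ∧ IsWalk E u L v ∧ List.Chain' (· ≤ ·) (L.map Prod.fst) ∧
    ∀ p ∈ L, α ≤ p.1 ∧ p.1 ≤ ω

/-- Starting time of a (nonempty) path. -/
noncomputable def sTime {V : Type*} (L : List (ℝ × V)) : ℝ := (L.map Prod.fst).headI

/-- Arrival time of a (nonempty) path. -/
noncomputable def aTime {V : Type*} (L : List (ℝ × V)) : ℝ := (L.map Prod.fst).getLastI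

/-- `(ω, v)` is reachable from `(α, u)`. -/
def Reach {V : Type*} (E : Set (ℝ × V × V)) (α : ℝ) (u : V) (ω : ℝ) (v : V) : Prop :=
  ∃ L, IsPath E α u ω v L

/-- The distance: minimal number of edges of a path from `(α,u)` to `(ω,v)`. -/
noncomputable def tdist {V : Type*} (E : Set (ℝ × V × V)) (α : ℝ) (u : V) (ω : ℝ) (v : V) : ℕ :=
  sInf {n | ∃ L, IsPath E α u ω v L ∧ L.length = n}

/-- The latency: minimal duration of a path from `(α,u)` to `(ω,v)`. -/
noncomputable def lat {V : Type*} (E : Set (ℝ × V × V)) (α : ℝ) (u : V) (ω : ℝ) (v : V) : ℝ :=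
  sInf {d | ∃ L, IsPath E α u ω v L ∧ aTime L - sTime L = d}

/-- The sf-metric: minimal length among fastest paths from `(α,u)` to `(ω,v)`. -/
noncomputable def sfm {V : Type*} (E : Set (ℝ × V × V)) (α : ℝ) (u : V) (ω : ℝ) (v : V) : ℕ :=
  sInf {n | ∃ L, IsPath E α u ω v L ∧ aTime L - sTime L = lat E α u ω v ∧ L.length = n}

lemma headI_le_getLastI : ∀ (l : List ℝ), l.Chain' (· ≤ ·) → l.headI ≤ l.getLastI
  | [], _ => le_refl _
  | [a], _ => le_refl _
  | a :: b :: l, h => by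
    rw [List.Chain', List.isChain_cons_cons] at h
    have ih := headI_le_getLastI (b :: l) h.2
    have : (a :: b :: l).getLastI = (b :: l).getLastI := by
      simp [List.getLastI_eq_getLast?]
    rw [List.headI] at ih ⊢
    rw [this]
    exact le_trans h.1 ih

lemma dur_nonneg {V : Type*} {E : Set (ℝ × V × V)} {α : ℝ} {u : V} {ω : ℝ} {v : V}
    {L : List (ℝ × V)} (h : IsPath E α u ω v L) : 0 ≤ aTime L - sTime L := by
  have := headI_le_getLastI (L.map Prod.fst) h.2.2.1
  simp only [aTime, sTime]; linarith

lemma lat_eq_zero {V : Type*} {E : Set (ℝ × V × V)} {α : ℝ} {u : V} {ω : ℝ} {v : V}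
    {L : List (ℝ × V)} (hL : IsPath E α u ω v L) (hd : aTime L - sTime L = 0) :
    lat E α u ω v = 0 := by
  apply le_antisymm
  · exact csInf_le ⟨0, fun d ⟨M, hM, hdM⟩ => hdM ▸ dur_nonneg hM⟩ ⟨L, hL, hd⟩
  · exact le_csInf ⟨0, L, hL, hd⟩ (fun d ⟨M, hM, hdM⟩ => hdM ▸ dur_nonneg hM)

def Ex : Set (ℝ × Fin 5 × Fin 5) := {(2,0,3), (2,3,4), (2,4,2), (5,0,1), (6,1,2)}

lemma path1 : IsPath Ex 1 0 5 1 [((5:ℝ),(1:Fin 5))] := by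
  refine ⟨by norm_num, ⟨?_, rfl⟩, by simp [List.Chain'], ?_⟩
  · simp [Ex]
  · intro p hp; simp at hp; subst hp; norm_num

lemma dur1 : aTime [((5:ℝ),(1:Fin 5))] - sTime [((5:ℝ),(1:Fin 5))] = 0 := by
  simp [aTime, sTime, List.getLastI]

lemma path2 : IsPath Ex 5 1 6 2 [((6:ℝ),(2:Fin 5))] := by
  refine ⟨by norm_num, ⟨?_, rfl⟩, by simp [List.Chain'], ?_⟩
  · simp [Ex]
  · intro p hp; simp at hp; subst hp; norm_num

lemma dur2 : aTime [((6:ℝ),(2:Fin 5))] - sTime [((6:ℝ),(2:Fin 5))] = 0 := by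
  simp [aTime, sTime, List.getLastI]

def L3 : List (ℝ × Fin 5) := [(2,3),(2,4),(2,2)]

lemma path3 : IsPath Ex 1 0 6 2 L3 := by
  refine ⟨by norm_num, ⟨?_, ?_, ?_, rfl⟩, ?_, ?_⟩
  · simp [Ex]
  · simp [Ex]
  · simp [Ex]
  · simp [L3, List.Chain']
  · intro p hp
    simp only [L3, List.mem_cons, List.not_mem_nil, or_false] at hp
    rcases hp with h | h | h <;> subst h <;> norm_num

lemma dur3 : aTime L3 - sTime L3 = 0 := by
  simp [aTime, sTime, L3, List.getLastI]

lemma sfm1_le : sfm Ex 1 0 5 1 ≤ 1 :=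
  Nat.sInf_le ⟨_, path1, by rw [lat_eq_zero path1 dur1]; exact dur1, rfl⟩

lemma sfm2_le : sfm Ex 5 1 6 2 ≤ 1 :=
  Nat.sInf_le ⟨_, path2, by rw [lat_eq_zero path2 dur2]; exact dur2, rfl⟩

lemma sfm3_ge : 3 ≤ sfm Ex 1 0 6 2 := by
  have hlat : lat Ex 1 0 6 2 = 0 := lat_eq_zero path3 dur3
  refine le_csInf ⟨3, ?_⟩ ?_
  · exact ⟨L3, path3, by rw [hlat]; exact dur3, rfl⟩
  rintro n ⟨L, hL, hdur, rfl⟩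
  rw [hlat] at hdur
  obtain ⟨-, hw, -, -⟩ := hL
  match L, hw, hdur with
  | [], hw, _ =>
    simp only [IsWalk] at hw
    exact absurd hw (by decide)
  | [(t1, x1)], ⟨h1, hw⟩, _ =>
    exfalso
    simp only [IsWalk] at hw; subst hw
    simp only [Ex, Set.mem_insert_iff, Set.mem_singleton_iff, Prod.mk.injEq] at h1
    rcases h1 with ⟨-,-,h⟩|⟨-,h,-⟩|⟨-,h,-⟩|⟨-,-,h⟩|⟨-,h,-⟩ <;> exact absurd h (by decide)
  | [(t1, x1), (t2, x2)], ⟨h1, h2, hw⟩, hdur =>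
    exfalso
    simp only [IsWalk] at hw; subst hw
    simp only [Ex, Set.mem_insert_iff, Set.mem_singleton_iff, Prod.mk.injEq] at h1 h2
    have hd : t2 - t1 = 0 := by
      simpa [aTime, sTime, List.getLastI] using hdur
    rcases h1 with ⟨ht1,-,hx1⟩|⟨-,h,-⟩|⟨-,h,-⟩|⟨ht1,-,hx1⟩|⟨-,h,-⟩
    · subst hx1
      rcases h2 with ⟨-,h,-⟩|⟨-,-,h⟩|⟨-,h,-⟩|⟨-,-,h⟩|⟨-,h,-⟩ <;> exact absurd h (by decide)
    · exact absurd h (by decide)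
    · exact absurd h (by decide)
    · subst hx1
      rcases h2 with ⟨-,h,-⟩|⟨-,h,-⟩|⟨-,h,-⟩|⟨-,h,-⟩|⟨ht2,-,-⟩
      · exact absurd h (by decide)
      · exact absurd h (by decide)
      · exact absurd h (by decide)
      · exact absurd h (by decide)
      · subst ht1; subst ht2; norm_num at hd
    · exact absurd h (by decide)
  | p1 :: p2 :: p3 :: rest, _, _ =>
    simp only [List.length_cons]; omega


/-- The sf-metric is not a metric: it can violate the triangle inequality. -/
theorem sfm_not_triangle :
    ∃ (V : Type) (E : Set (ℝ × V × V)) (α β ω : ℝ) (u v w : V),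
      Reach E α u β v ∧ Reach E β v ω w ∧ Reach E α u ω w ∧
        sfm E α u β v + sfm E β v ω w < sfm E α u ω w := by
  refine ⟨Fin 5, Ex, 1, 5, 6, 0, 1, 2, ⟨_, path1⟩, ⟨_, path2⟩, ⟨_, path3⟩, ?_⟩
  have h1 := sfm1_le
  have h2 := sfm2_le
  have h3 := sfm3_ge
  omega
end

section
/- If s is a largest starting time from (α,u) to (ω,v) (i.e., the maximum of first coordinates over SA((α,u),(ω,v))) and a is the minimal arrival time among paths from (α,u) to (ω,v) starting at s, then either a − s = ℓ((α,u),(ω,v)), or there exists a pair (s',a') ∈ SA((α,u),(ω,v)) with a' < a and a' − s' = ℓ((α,u),(ω,v)). -/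
theorem IsWalk.fst_mem_image_fst {V : Type*} {E : Set (ℝ × V × V)} :
    ∀ {u : V} {L : List (ℝ × V)} {v : V}, IsWalk E u L v → ∀ q ∈ L, q.1 ∈ Prod.fst '' E
  | _, [], _, _, _, hq => by simp at hq
  | u, (t, w) :: _, _, ⟨he, hw⟩, _, hq => by
    rcases List.mem_cons.mp hq with rfl | hq
    · exact ⟨(t, u, w), he, rfl⟩
    · exact hw.fst_mem_image_fst _ hq

theorem sTime_mem_map_fst {V : Type*} {L : List (ℝ × V)} (hL : L ≠ []) :
    sTime L ∈ L.map Prod.fst := by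
  obtain ⟨a, rest, rfl⟩ := List.exists_cons_of_ne_nil hL
  simp [sTime]

theorem aTime_mem_map_fst {V : Type*} {L : List (ℝ × V)} (hL : L ≠ []) :
    aTime L ∈ L.map Prod.fst := by
  have hL' : L.map Prod.fst ≠ [] := by simpa using hL
  rw [aTime, List.getLastI_eq_getLast?_getD, List.getLast?_eq_some_getLast hL']
  exact List.getLast_mem hL'

theorem finite_setOf_sTime_aTime {V : Type*} {E : Set (ℝ × V × V)} (hE : E.Finite)
    (α ω : ℝ) (u v : V) :
    {p : ℝ × ℝ | ∃ L, IsPath E α u ω v L ∧ L ≠ [] ∧ sTime L = p.1 ∧ aTime L = p.2}.Finite := by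
  have hT : (Prod.fst '' E).Finite := hE.image _
  refine (hT.prod hT).subset ?_
  rintro ⟨s, a⟩ ⟨L, hL, hLne, rfl, rfl⟩
  have hmem : ∀ t ∈ L.map Prod.fst, t ∈ Prod.fst '' E := by
    simpa using hL.2.1.fst_mem_image_fst
  exact ⟨hmem _ (sTime_mem_map_fst hLne), hmem _ (aTime_mem_map_fst hLne)⟩

theorem sub_eq_sInf_or_exists_lt_of_forall_fst_le {α : Type*}
    [ConditionallyCompleteLinearOrder α] [AddCommGroup α] [IsOrderedAddMonoid α]
    {S : Set (α × α)} (hS : S.Finite) {s a : α} (hsa : (s, a) ∈ S)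
    (hs : ∀ p ∈ S, p.1 ≤ s) :
    a - s = sInf ((fun p ↦ p.2 - p.1) '' S) ∨
      ∃ p ∈ S, p.2 < a ∧ p.2 - p.1 = sInf ((fun p ↦ p.2 - p.1) '' S) := by
  have hfin : ((fun p : α × α ↦ p.2 - p.1) '' S).Finite := hS.image _
  obtain ⟨p, hp, hp_min⟩ := (Set.Nonempty.image _ ⟨_, hsa⟩).csInf_mem hfin
  rcases lt_or_ge p.2 a with hlt | hle
  · exact .inr ⟨p, hp, hlt, hp_min⟩
  · refine .inl (le_antisymm ?_ (csInf_le hfin.bddBelow ⟨_, hsa, rfl⟩))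
    calc a - s ≤ p.2 - p.1 := sub_le_sub hle (hs p hp)
      _ = _ := hp_min

theorem largest_start_latency_dichotomy_general {V : Type*} (E : Set (ℝ × V × V)) (hE : E.Finite)
    (α ω : ℝ) (u v : V) (SA : Set (ℝ × ℝ))
    (hSA : SA = {p | ∃ L, IsPath E α u ω v L ∧ L ≠ [] ∧ sTime L = p.1 ∧ aTime L = p.2})
    (smax amin : ℝ)
    (hs : IsGreatest (Prod.fst '' SA) smax)
    (ha : IsLeast {a | (smax, a) ∈ SA} amin) :
    amin - smax = sInf {d | ∃ p ∈ SA, p.2 - p.1 = d} ∨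
      ∃ p ∈ SA, p.2 < amin ∧ p.2 - p.1 = sInf {d | ∃ p ∈ SA, p.2 - p.1 = d} := by
  have hfin : SA.Finite := hSA ▸ finite_setOf_sTime_aTime hE α ω u v
  exact sub_eq_sInf_or_exists_lt_of_forall_fst_le hfin ha.1 fun p hp ↦ hs.2 ⟨p, hp, rfl⟩

/-- If `smax` is the largest starting time over `SA((α,u),(ω,v))` and `amin` the minimal
arrival time among paths starting at `smax`, then either `amin − smax` is the latency, or
some pair `(s',a') ∈ SA` with `a' < amin` realizes the latency. -/
theorem largest_start_latency_dichotomy {V : Type*} (E : Set (ℝ × V × V)) (hE : E.Finite)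
    (α ω : ℝ) (u v : V) (SA : Set (ℝ × ℝ))
    (hSA : SA = {p | ∃ L, IsPath E α u ω v L ∧ L ≠ [] ∧ sTime L = p.1 ∧ aTime L = p.2})
    (hne : SA.Nonempty) (smax amin : ℝ)
    (hs : IsGreatest (Prod.fst '' SA) smax)
    (ha : IsLeast {a | (smax, a) ∈ SA} amin) :
    amin - smax = sInf {d | ∃ p ∈ SA, p.2 - p.1 = d} ∨
      ∃ p ∈ SA, p.2 < amin ∧ p.2 - p.1 = sInf {d | ∃ p ∈ SA, p.2 - p.1 = d} :=
  largest_start_latency_dichotomy_general E hE α ω u v SA hSA smax amin hs ha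
end
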